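/- With L_{n,l}^{α,β} as defined, for all x ∈ [0,1]: L_{n,l}^{α,β}(t²;q;x) = 1/(([n+1]_q+β)²[3]_q) + 2α/(([n+1]_q+β)²[2]_q) + α²/([n+1]_q+β)² + q[n+l]_q((3+4α)+(5+4α)q+4(1+α)q²)/(([n+1]_q+β)²[2]_q[3]_q) · x + q²[n+l]_q[n+l-1]_q(1+q+4q²)/(([n+1]_q+β)²[2]_q[3]_q) · x². -/

import Mathlib

noncomputable section

/-- q-integer [n]_q = (1-q^n)/(1-q). -/
def qInt (q : ℝ) (n : ℕ) : ℝ := (1 - q ^ n) / (1 - q)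

/-- q-factorial [n]_q!. -/
def qFact (q : ℝ) (n : ℕ) : ℝ := ∏ i ∈ Finset.range n, qInt q (i + 1)

/-- q-binomial coefficient. -/
def qBinom (q : ℝ) (n k : ℕ) : ℝ := qFact q n / (qFact q k * qFact q (n - k))

/-- q-analogue (1-x)_q^m = ∏_{j<m} (1 - q^j x). -/
def qPoch (q x : ℝ) (m : ℕ) : ℝ := ∏ j ∈ Finset.range m, (1 - q ^ j * x)

/-- Riemann-type q-integral over [a,b]. -/
def qRInt (q a b : ℝ) (f : ℝ → ℝ) : ℝ :=
  (1 - q) * (b - a) * ∑' s : ℕ, f (a + (b - a) * q ^ s) * q ^ s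

/-- q-Bernstein-Schurer basis function b_{n,l}^k(q;x). -/
def bern (q : ℝ) (n l k : ℕ) (x : ℝ) : ℝ :=
  qBinom q (n + l) k * x ^ k * qPoch q x (n + l - k)

/-- Stancu-type q-Bernstein-Schurer-Kantorovich operator. -/
def Lop (q α β : ℝ) (n l : ℕ) (f : ℝ → ℝ) (x : ℝ) : ℝ :=
  (qInt q (n + 1) + β) * ∑ k ∈ Finset.range (n + l + 1),
    bern q n l k x * (q ^ k)⁻¹ *
      qRInt q ((qInt q k + α) / (qInt q (n + 1) + β))
        ((qInt q (k + 1) + α) / (qInt q (n + 1) + β)) f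

/-!
Over a cell `[a, a + q^k/D]` the Riemann-type q-integral of `t²` is a sum of three geometric
series. After multiplying by `q^{-k}` and writing `q^k = 1 - (1-q)[k]_q`, each summand of the
operator becomes a quadratic polynomial in `[k]_q`, so the operator reduces to the q-Bernstein
means of `1`, `[k]_q` and `[k]_q²`. These are `1`, `[m]_q x` and `[m]_q x + q [m]_q [m-1]_q x²`,
by induction on `m` from the recursion that the q-Pascal rule gives for the q-Bernstein basis.
-/

section QInt

variable {q : ℝ}

lemma qInt_zero : qInt q 0 = 0 := by simp [qInt]

lemma qInt_succ (hq : q ≠ 1) (k : ℕ) : qInt q (k + 1) = qInt q k + q ^ k := by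
  have : 1 - q ≠ 0 := sub_ne_zero.mpr hq.symm
  unfold qInt
  field_simp
  ring

lemma pow_eq_one_sub_mul_qInt (hq : q ≠ 1) (k : ℕ) : q ^ k = 1 - (1 - q) * qInt q k := by
  have : 1 - q ≠ 0 := sub_ne_zero.mpr hq.symm
  rw [qInt, mul_div_cancel₀ _ this]
  ring

lemma qInt_pos (hq : 0 < q) (hq1 : q < 1) (k : ℕ) : 0 < qInt q (k + 1) :=
  div_pos (sub_pos.mpr (pow_lt_one₀ hq.le hq1 k.succ_ne_zero)) (sub_pos.mpr hq1)

lemma qInt_add (hq : q ≠ 1) (a b : ℕ) : qInt q (a + b) = qInt q b + q ^ b * qInt q a := by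
  have : 1 - q ≠ 0 := sub_ne_zero.mpr hq.symm
  unfold qInt
  field_simp
  ring

lemma qFact_zero : qFact q 0 = 1 := Finset.prod_range_zero _

lemma qFact_succ (n : ℕ) : qFact q (n + 1) = qFact q n * qInt q (n + 1) :=
  Finset.prod_range_succ _ _

lemma qFact_pos (hq : 0 < q) (hq1 : q < 1) (n : ℕ) : 0 < qFact q n :=
  Finset.prod_pos fun i _ => qInt_pos hq hq1 i

lemma qBinom_zero_right (hq : 0 < q) (hq1 : q < 1) (m : ℕ) : qBinom q m 0 = 1 := by
  rw [qBinom, Nat.sub_zero, qFact_zero, one_mul,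
    div_self (qFact_pos hq hq1 m).ne']

lemma qBinom_self (hq : 0 < q) (hq1 : q < 1) (m : ℕ) : qBinom q m m = 1 := by
  rw [qBinom, Nat.sub_self, qFact_zero, mul_one,
    div_self (qFact_pos hq hq1 m).ne']

lemma qBinom_succ_succ (hq : 0 < q) (hq1 : q < 1) {m k : ℕ} (hk : k < m) :
    qBinom q (m + 1) (k + 1) = qBinom q m (k + 1) + q ^ (m - k) * qBinom q m k := by
  obtain ⟨j, rfl⟩ := Nat.exists_eq_add_of_lt hk
  rw [qBinom, qBinom, qBinom, show k + j + 1 - k = j + 1 by omega,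
    show k + j + 1 + 1 - (k + 1) = j + 1 by omega, show k + j + 1 - (k + 1) = j by omega,
    qFact_succ (k + j + 1), qFact_succ k, qFact_succ j,
    show k + j + 1 + 1 = (k + 1) + (j + 1) by omega, qInt_add hq1.ne]
  have := (qFact_pos hq hq1 k).ne'
  have := (qFact_pos hq hq1 j).ne'
  have := (qInt_pos hq hq1 k).ne'
  have := (qInt_pos hq hq1 j).ne'
  field_simp

end QInt

section QBernstein

variable {q x : ℝ}

lemma qPoch_succ (m : ℕ) : qPoch q x (m + 1) = qPoch q x m * (1 - q ^ m * x) :=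
  Finset.prod_range_succ _ _

def qBernsteinSum (q x : ℝ) (m : ℕ) (g : ℕ → ℝ) : ℝ :=
  ∑ k ∈ Finset.range (m + 1), qBinom q m k * x ^ k * qPoch q x (m - k) * g k

lemma qBernsteinSum_congr {m : ℕ} {g h : ℕ → ℝ} (H : ∀ k ≤ m, g k = h k) :
    qBernsteinSum q x m g = qBernsteinSum q x m h :=
  Finset.sum_congr rfl fun k hk => by rw [H k (Nat.lt_succ_iff.mp (Finset.mem_range.mp hk))]

lemma qBernsteinSum_add {m : ℕ} (g h : ℕ → ℝ) :
    qBernsteinSum q x m (fun k => g k + h k) = qBernsteinSum q x m g + qBernsteinSum q x m h := by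
  simp only [qBernsteinSum, mul_add, Finset.sum_add_distrib]

lemma qBernsteinSum_const_mul {m : ℕ} (c : ℝ) (g : ℕ → ℝ) :
    qBernsteinSum q x m (fun k => c * g k) = c * qBernsteinSum q x m g := by
  rw [qBernsteinSum, qBernsteinSum, Finset.mul_sum]
  exact Finset.sum_congr rfl fun k _ => by ring

lemma qBernsteinSum_div {m : ℕ} (g : ℕ → ℝ) (d : ℝ) :
    qBernsteinSum q x m (fun k => g k / d) = qBernsteinSum q x m g / d := by
  simp only [div_eq_inv_mul, qBernsteinSum_const_mul]

/-- Splitting the last factor `1 - q^{m-k} x` off `qPoch q x (m+1-k)` against the q-Pascal rule. -/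
lemma qBernsteinSum_succ (hq : 0 < q) (hq1 : q < 1) (m : ℕ) (g : ℕ → ℝ) :
    qBernsteinSum q x (m + 1) g
      = qBernsteinSum q x m
          (fun k => (1 - q ^ (m - k) * x) * g k + q ^ (m - k) * x * g (k + 1)) := by
  set A : ℕ → ℝ := fun k => qBinom q m k * x ^ k * qPoch q x (m + 1 - k) * g k
  set B : ℕ → ℝ :=
    fun k => q ^ (m - k) * qBinom q m k * x ^ (k + 1) * qPoch q x (m - k) * g (k + 1)
  have hsplit : qBernsteinSum q x m
        (fun k => (1 - q ^ (m - k) * x) * g k + q ^ (m - k) * x * g (k + 1))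
      = ∑ k ∈ Finset.range (m + 1), A k + ∑ k ∈ Finset.range (m + 1), B k := by
    rw [qBernsteinSum, ← Finset.sum_add_distrib]
    refine Finset.sum_congr rfl fun k hk => ?_
    simp only [A, B]
    rw [show m + 1 - k = m - k + 1 by have := Finset.mem_range.mp hk; omega, qPoch_succ]
    ring
  have hinner : ∀ i < m, qBinom q (m + 1) (i + 1) * x ^ (i + 1) * qPoch q x (m + 1 - (i + 1))
      * g (i + 1) = A (i + 1) + B i := fun i hi => by
    simp only [A, B]
    rw [qBinom_succ_succ hq hq1 hi, show m + 1 - (i + 1) = m - i by omega]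
    ring
  rw [hsplit, qBernsteinSum, Finset.sum_range_succ', Finset.sum_range_succ,
    Finset.sum_range_succ' A, Finset.sum_range_succ B,
    Finset.sum_congr rfl fun i hi => hinner i (Finset.mem_range.mp hi), Finset.sum_add_distrib]
  simp only [A, B, qBinom_zero_right hq hq1, qBinom_self hq hq1, Nat.sub_self, Nat.sub_zero,
    pow_zero]
  ring

lemma qBernsteinSum_const (hq : 0 < q) (hq1 : q < 1) (c : ℝ) (m : ℕ) :
    qBernsteinSum q x m (fun _ => c) = c := by
  induction m with
  | zero => simp [qBernsteinSum, qBinom_zero_right hq hq1, qPoch]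
  | succ m ih =>
    rw [qBernsteinSum_succ hq hq1, qBernsteinSum_congr (h := fun _ => c) fun k _ => by ring, ih]

lemma qBernsteinSum_qInt (hq : 0 < q) (hq1 : q < 1) (m : ℕ) :
    qBernsteinSum q x m (qInt q) = qInt q m * x := by
  induction m with
  | zero => simp [qBernsteinSum, qInt_zero]
  | succ m ih =>
    rw [qBernsteinSum_succ hq hq1,
      qBernsteinSum_congr (h := fun k => qInt q k + q ^ m * x) fun k hk => by
        have e : q ^ (m - k) * q ^ k = q ^ m := by rw [← pow_add, Nat.sub_add_cancel hk]
        rw [qInt_succ hq1.ne k]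
        linear_combination x * e,
      qBernsteinSum_add, ih, qBernsteinSum_const hq hq1, qInt_succ hq1.ne m]
    ring

lemma qBernsteinSum_qInt_sq (hq : 0 < q) (hq1 : q < 1) (m : ℕ) :
    qBernsteinSum q x m (fun k => qInt q k ^ 2)
      = qInt q m * x + q * qInt q m * qInt q (m - 1) * x ^ 2 := by
  induction m with
  | zero => simp [qBernsteinSum, qInt_zero]
  | succ m ih =>
    rw [qBernsteinSum_succ hq hq1,
      qBernsteinSum_congr (h := fun k => qInt q k ^ 2 + q ^ m * x * (1 + q) * qInt q k + q ^ m * x)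
        fun k hk => by
          have e : q ^ (m - k) * q ^ k = q ^ m := by rw [← pow_add, Nat.sub_add_cancel hk]
          rw [qInt_succ hq1.ne k]
          linear_combination (2 * x * qInt q k + x * q ^ k) * e
            + q ^ m * x * pow_eq_one_sub_mul_qInt hq1.ne k,
      qBernsteinSum_add, qBernsteinSum_add, qBernsteinSum_const_mul, ih, qBernsteinSum_qInt hq hq1,
      qBernsteinSum_const hq hq1, Nat.add_sub_cancel]
    cases m with
    | zero => simp [qInt_zero, qInt_succ hq1.ne]
    | succ m =>
      rw [Nat.add_sub_cancel, qInt_succ hq1.ne (m + 1), qInt_succ hq1.ne m]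
      ring

lemma qBernsteinSum_quadratic (hq : 0 < q) (hq1 : q < 1) (m : ℕ) (a b c : ℝ) :
    qBernsteinSum q x m (fun k => a + b * qInt q k + c * qInt q k ^ 2)
      = a + b * (qInt q m * x) + c * (qInt q m * x + q * qInt q m * qInt q (m - 1) * x ^ 2) := by
  rw [qBernsteinSum_add, qBernsteinSum_add, qBernsteinSum_const hq hq1, qBernsteinSum_const_mul,
    qBernsteinSum_const_mul, qBernsteinSum_qInt hq hq1, qBernsteinSum_qInt_sq hq hq1]

end QBernstein

section QIntegral

variable {q : ℝ}

lemma qRInt_sq (hq : |q| < 1) (a c : ℝ) :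
    qRInt q a (a + c) (fun t => t ^ 2)
      = c * (a ^ 2 + 2 * a * c / (1 + q) + c ^ 2 / (1 + q + q ^ 2)) := by
  have hq2 : |q ^ 2| < 1 := by rw [abs_pow]; exact pow_lt_one₀ (abs_nonneg q) hq two_ne_zero
  have hq3 : |q ^ 3| < 1 := by rw [abs_pow]; exact pow_lt_one₀ (abs_nonneg q) hq three_ne_zero
  have s1 := summable_geometric_of_abs_lt_one hq
  have s2 := summable_geometric_of_abs_lt_one hq2
  have s3 := summable_geometric_of_abs_lt_one hq3
  have hterm : ∀ s : ℕ, (a + (a + c - a) * q ^ s) ^ 2 * q ^ s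
      = a ^ 2 * q ^ s + 2 * a * c * (q ^ 2) ^ s + c ^ 2 * (q ^ 3) ^ s := fun s => by ring
  rw [qRInt, tsum_congr hterm, ((s1.mul_left _).add (s2.mul_left _)).tsum_add (s3.mul_left _),
    (s1.mul_left _).tsum_add (s2.mul_left _), tsum_mul_left, tsum_mul_left, tsum_mul_left,
    tsum_geometric_of_abs_lt_one hq, tsum_geometric_of_abs_lt_one hq2,
    tsum_geometric_of_abs_lt_one hq3]
  have h1 : 1 - q ≠ 0 := by linarith [le_abs_self q]
  have h2 : 1 + q ≠ 0 := by linarith [neg_abs_le q]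
  have h3 : 1 + q + q ^ 2 ≠ 0 := by nlinarith [sq_nonneg (q + 1 / 2)]
  have h2' : 1 - q ^ 2 ≠ 0 := by
    rw [show 1 - q ^ 2 = (1 - q) * (1 + q) by ring]; exact mul_ne_zero h1 h2
  have h3' : 1 - q ^ 3 ≠ 0 := by
    rw [show 1 - q ^ 3 = (1 - q) * (1 + q + q ^ 2) by ring]; exact mul_ne_zero h1 h3
  field_simp
  ring

lemma qRInt_sq_cell (hq0 : q ≠ 0) (hq : |q| < 1) {D : ℝ} (hD : D ≠ 0) (α : ℝ) (k : ℕ) :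
    (q ^ k)⁻¹ * qRInt q ((qInt q k + α) / D) ((qInt q (k + 1) + α) / D) (fun t => t ^ 2)
      = (α ^ 2 + 2 * α / (1 + q) + 1 / (1 + q + q ^ 2)
          + (4 * α * q / (1 + q) + 2 * q * (1 + 2 * q) / ((1 + q) * (1 + q + q ^ 2))) * qInt q k
          + q * (1 + q + 4 * q ^ 2) / ((1 + q) * (1 + q + q ^ 2)) * qInt q k ^ 2) / D ^ 3 := by
  have hq1 : q ≠ 1 := by rintro rfl; norm_num at hq
  have h2 : 1 + q ≠ 0 := by linarith [neg_abs_le q]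
  have h3 : 1 + q + q ^ 2 ≠ 0 := by nlinarith [sq_nonneg (q + 1 / 2)]
  rw [qInt_succ hq1, show (qInt q k + q ^ k + α) / D = (qInt q k + α) / D + q ^ k / D by ring,
    qRInt_sq hq, ← mul_assoc, div_eq_mul_inv (q ^ k), ← mul_assoc,
    inv_mul_cancel₀ (pow_ne_zero k hq0), one_mul, pow_eq_one_sub_mul_qInt hq1]
  field_simp
  ring

end QIntegral

lemma Lop_eq_qBernsteinSum (q α β : ℝ) (n l : ℕ) (f : ℝ → ℝ) (x : ℝ) :
    Lop q α β n l f x = (qInt q (n + 1) + β) * qBernsteinSum q x (n + l) (fun k =>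
      (q ^ k)⁻¹ * qRInt q ((qInt q k + α) / (qInt q (n + 1) + β))
        ((qInt q (k + 1) + α) / (qInt q (n + 1) + β)) f) := by
  simp only [Lop, qBernsteinSum, bern, mul_assoc]

theorem Lop_sq_general (q α β : ℝ) (hq : 0 < q) (hq1 : q < 1) (hβ : 0 < β)
    (n l : ℕ) (x : ℝ) :
    Lop q α β n l (fun t => t ^ 2) x =
      1 / ((qInt q (n + 1) + β) ^ 2 * (1 + q + q ^ 2))
        + 2 * α / ((qInt q (n + 1) + β) ^ 2 * (1 + q))
        + α ^ 2 / (qInt q (n + 1) + β) ^ 2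
        + q * qInt q (n + l) * ((3 + 4 * α) + (5 + 4 * α) * q + 4 * (1 + α) * q ^ 2)
            / ((qInt q (n + 1) + β) ^ 2 * (1 + q) * (1 + q + q ^ 2)) * x
        + q ^ 2 * qInt q (n + l) * qInt q (n + l - 1) * (1 + q + 4 * q ^ 2)
            / ((qInt q (n + 1) + β) ^ 2 * (1 + q) * (1 + q + q ^ 2)) * x ^ 2 := by
  have hD : qInt q (n + 1) + β ≠ 0 := (add_pos (qInt_pos hq hq1 n) hβ).ne'
  have habs : |q| < 1 := abs_lt.mpr ⟨by linarith, hq1⟩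
  rw [Lop_eq_qBernsteinSum, qBernsteinSum_congr fun k _ => qRInt_sq_cell hq.ne' habs hD α k,
    qBernsteinSum_div, qBernsteinSum_quadratic hq hq1]
  have : 1 + q + q ^ 2 ≠ 0 := by positivity
  field_simp
  ring

theorem Lop_sq (q α β : ℝ) (hq : 0 < q) (hq1 : q < 1) (hβ : 0 < β) (hβα : β ≤ α)
    (n l : ℕ) (hnl : 2 ≤ n + l) (x : ℝ) (hx0 : 0 ≤ x) (hx1 : x ≤ 1) :
    Lop q α β n l (fun t => t ^ 2) x =
      1 / ((qInt q (n + 1) + β) ^ 2 * (1 + q + q ^ 2))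
        + 2 * α / ((qInt q (n + 1) + β) ^ 2 * (1 + q))
        + α ^ 2 / (qInt q (n + 1) + β) ^ 2
        + q * qInt q (n + l) * ((3 + 4 * α) + (5 + 4 * α) * q + 4 * (1 + α) * q ^ 2)
            / ((qInt q (n + 1) + β) ^ 2 * (1 + q) * (1 + q + q ^ 2)) * x
        + q ^ 2 * qInt q (n + l) * qInt q (n + l - 1) * (1 + q + 4 * q ^ 2)
            / ((qInt q (n + 1) + β) ^ 2 * (1 + q) * (1 + q + q ^ 2)) * x ^ 2 :=
  Lop_sq_general q α β hq hq1 hβ n l x
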